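/- arXiv:1605.02014 — 4 statements merged into one kernel-verified Lean document; each statement's English description precedes it below -/
import Mathlib

section
/- Let H be a separable complex Hilbert space with Hilbert basis (f_i)_{i∈ℕ}, let E be a Polish space with its Borel σ-algebra, and let j : H → E be a continuous injective map. Assume that for each i ∈ ℕ there is a continuous function φ_i : E → ℂ with φ_i(j(x)) = ⟨x, f_i⟩ for all x ∈ H. Let ξ_n (n ∈ ℕ) and ξ be H-valued random variables on a probability space (Ω, F, ℙ) with E[‖ξ_n‖²_H] < ∞ for all n and E[‖ξ‖²_H] < ∞. Suppose that: (a) the laws of j∘ξ_n converge weakly to the law of j∘ξ on E; (b) E[‖ξ_n‖²_H] → E[‖ξ‖²_H] as n → ∞; and (c) the family {‖ξ_n‖²_H : n ∈ ℕ} is uniformly integrable. Then the laws of ξ_n converge weakly to the law of ξ on H. -/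
open MeasureTheory Filter Topology BoundedContinuousFunction RCLike

local notation "⟪" x ", " y "⟫" => @inner ℂ _ _ x y

lemma aux_tendsto_of_abs {u : ℕ → ℝ} {l : ℝ}
    (h : ∀ ε > (0:ℝ), ∀ᶠ n in atTop, |u n - l| ≤ ε) : Tendsto u atTop (𝓝 l) := by
  refine Metric.tendsto_nhds.mpr fun ε hε => ?_
  filter_upwards [h (ε/2) (by linarith)] with n hn
  rw [Real.dist_eq]; linarith

lemma aux_integrable_comp {Ω : Type*} [MeasurableSpace Ω] {X : Type*} [MeasurableSpace X]
    [TopologicalSpace X] [OpensMeasurableSpace X] (ℙ : Measure Ω) [IsFiniteMeasure ℙ]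
    {ξ : Ω → X} (hm : Measurable ξ) (g : X →ᵇ ℝ) : Integrable (fun ω => g (ξ ω)) ℙ :=
  Integrable.mono' (integrable_const ‖g‖)
    ((g.continuous.measurable.comp hm).aestronglyMeasurable)
    (Eventually.of_forall fun _ => g.norm_coe_le_norm _)

lemma aux_tendsto_of_lipschitz {Ω : Type*} [MeasurableSpace Ω] {X : Type*} [MeasurableSpace X]
    [PseudoMetricSpace X] [OpensMeasurableSpace X] (ℙ : Measure Ω) [IsProbabilityMeasure ℙ]
    (ξ : ℕ → Ω → X) (ξlim : Ω → X) (hmeas : ∀ n, Measurable (ξ n)) (hmeaslim : Measurable ξlim)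
    (h : ∀ (L : NNReal) (g : X →ᵇ ℝ), LipschitzWith L g →
      Tendsto (fun n => ∫ ω, g (ξ n ω) ∂ℙ) atTop (𝓝 (∫ ω, g (ξlim ω) ∂ℙ))) :
    ∀ g : X →ᵇ ℝ, Tendsto (fun n => ∫ ω, g (ξ n ω) ∂ℙ) atTop (𝓝 (∫ ω, g (ξlim ω) ∂ℙ)) := by
  have hmap : ∀ n, IsProbabilityMeasure (ℙ.map (ξ n)) := fun n =>
    Measure.isProbabilityMeasure_map (hmeas n).aemeasurable
  have hmaplim : IsProbabilityMeasure (ℙ.map ξlim) := Measure.isProbabilityMeasure_map hmeaslim.aemeasurable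
  set μs : ℕ → ProbabilityMeasure X := fun n => ⟨ℙ.map (ξ n), hmap n⟩ with hμs
  set μ : ProbabilityMeasure X := ⟨ℙ.map ξlim, hmaplim⟩ with hμ
  have hcoe : ∀ n (G : Set X), MeasurableSet G → μs n G = (ℙ (ξ n ⁻¹' G)).toNNReal := by
    intro n G hG
    simp only [hμs, ProbabilityMeasure.coeFn_def, ProbabilityMeasure.coe_mk,
      ProbabilityMeasure.mk_apply, Measure.map_apply (hmeas n) hG]
  have hcoelim : ∀ (G : Set X), MeasurableSet G → μ G = (ℙ (ξlim ⁻¹' G)).toNNReal := by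
    intro G hG
    simp only [hμ, ProbabilityMeasure.coeFn_def, ProbabilityMeasure.coe_mk,
      ProbabilityMeasure.mk_apply, Measure.map_apply hmeaslim hG]
  have key : Tendsto μs atTop (𝓝 μ) := by
    apply tendsto_of_forall_isOpen_le_liminf
    intro G hG
    rcases Set.eq_empty_or_nonempty Gᶜ with hGc | hGc
    · have hGu : G = Set.univ := by
        rw [← Set.compl_empty, ← hGc, compl_compl]
      simp [hGu, ProbabilityMeasure.coeFn_univ, liminf_const]
    · set F := Gᶜ with hFdef
      have hFc : IsClosed F := hG.isClosed_compl
      have cont : ∀ k : ℕ, Continuous fun x : X => min 1 ((k : ℝ) * Metric.infDist x F) := fun k =>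
        continuous_const.min (continuous_const.mul (Metric.continuous_infDist_pt F))
      have hbnd : ∀ (k : ℕ) (x : X), ‖min 1 ((k : ℝ) * Metric.infDist x F)‖ ≤ 1 := by
        intro k x
        rw [Real.norm_eq_abs, abs_le]
        constructor
        · have : (0:ℝ) ≤ (k : ℝ) * Metric.infDist x F :=
            mul_nonneg (Nat.cast_nonneg k) Metric.infDist_nonneg
          have := le_min zero_le_one this
          linarith
        · exact min_le_left _ _
      set hk : ℕ → (X →ᵇ ℝ) := fun k =>
        BoundedContinuousFunction.ofNormedAddCommGroup _ (cont k) 1 (hbnd k) with hhk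
      have hkapp : ∀ k x, hk k x = min 1 ((k : ℝ) * Metric.infDist x F) := fun k x => rfl
      have hlip : ∀ k : ℕ, LipschitzWith (k : NNReal) (hk k) := by
        intro k
        have h1 : LipschitzWith (k : NNReal) fun x : X => (k : ℝ) * Metric.infDist x F := by
          refine LipschitzWith.of_dist_le_mul fun x y => ?_
          have := (Metric.lipschitz_infDist_pt F).dist_le_mul x y
          rw [Real.dist_eq, ← mul_sub, abs_mul, Nat.abs_cast]
          rw [NNReal.coe_natCast]
          exact mul_le_mul_of_nonneg_left (by simpa [Real.dist_eq] using this)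
            (Nat.cast_nonneg k)
        exact h1.const_min 1
      have hconv : ∀ k, Tendsto (fun n => ∫ ω, hk k (ξ n ω) ∂ℙ) atTop
          (𝓝 (∫ ω, hk k (ξlim ω) ∂ℙ)) := fun k => h _ _ (hlip k)
      have hle : ∀ k n, ∫ ω, hk k (ξ n ω) ∂ℙ ≤ (ℙ (ξ n ⁻¹' G)).toReal := by
        intro k n
        have hptw : ∀ ω, hk k (ξ n ω) ≤ Set.indicator (ξ n ⁻¹' G) (fun _ => (1:ℝ)) ω := by
          intro ω
          by_cases hω : ξ n ω ∈ G
          · rw [Set.indicator_of_mem (show ω ∈ ξ n ⁻¹' G from hω)]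
            exact min_le_left _ _
          · have hmem : ξ n ω ∈ F := hω
            rw [Set.indicator_of_notMem (show ω ∉ ξ n ⁻¹' G from hω), hkapp,
              Metric.infDist_zero_of_mem hmem]
            simp
        calc ∫ ω, hk k (ξ n ω) ∂ℙ
            ≤ ∫ ω, Set.indicator (ξ n ⁻¹' G) (fun _ => (1:ℝ)) ω ∂ℙ :=
              integral_mono (aux_integrable_comp ℙ (hmeas n) (hk k))
                ((integrable_const (1:ℝ)).indicator ((hmeas n) hG.measurableSet))
                hptw
          _ = (ℙ (ξ n ⁻¹' G)).toReal := by
              rw [integral_indicator ((hmeas n) hG.measurableSet)]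
              simp
              rfl
      have hmono : Tendsto (fun k => ∫ ω, hk k (ξlim ω) ∂ℙ) atTop
          (𝓝 ((ℙ (ξlim ⁻¹' G)).toReal)) := by
        have heq : (ℙ (ξlim ⁻¹' G)).toReal
            = ∫ ω, Set.indicator (ξlim ⁻¹' G) (fun _ => (1:ℝ)) ω ∂ℙ := by
          rw [integral_indicator (hmeaslim hG.measurableSet)]
          simp
          rfl
        rw [heq]
        refine tendsto_integral_of_dominated_convergence (fun _ => (1:ℝ))
          (fun k => (aux_integrable_comp ℙ hmeaslim (hk k)).1) (integrable_const 1)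
          (fun k => Eventually.of_forall fun ω => ?_) (Eventually.of_forall fun ω => ?_)
        · exact hbnd k (ξlim ω)
        · by_cases hω : ξlim ω ∈ G
          · have hnm : ξlim ω ∉ F := fun hmem => hmem hω
            have hd : 0 < Metric.infDist (ξlim ω) F :=
              ((hFc.notMem_iff_infDist_pos hGc).mp hnm)
            rw [Set.indicator_of_mem (show ω ∈ ξlim ⁻¹' G from hω)]
            have hev : ∀ᶠ k : ℕ in atTop, hk k (ξlim ω) = 1 := by
              filter_upwards [eventually_ge_atTop ⌈1 / Metric.infDist (ξlim ω) F⌉₊] with k hkk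
              rw [hkapp]
              have h1 : 1 / Metric.infDist (ξlim ω) F ≤ (k : ℝ) :=
                le_trans (Nat.le_ceil _) (by exact_mod_cast hkk)
              have : (1:ℝ) ≤ (k : ℝ) * Metric.infDist (ξlim ω) F := by
                rw [div_le_iff₀ hd] at h1
                linarith
              exact min_eq_left this
            exact Tendsto.congr' (hev.mono fun k hkk => hkk.symm) tendsto_const_nhds
          · have hmem : ξlim ω ∈ F := hω
            rw [Set.indicator_of_notMem (show ω ∉ ξlim ⁻¹' G from hω)]
            have : ∀ k : ℕ, hk k (ξlim ω) = 0 := by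
              intro k
              rw [hkapp, Metric.infDist_zero_of_mem hmem]
              simp
            simpa [this] using tendsto_const_nhds (x := (0:ℝ))
      -- final liminf argument
      have hcob : IsCoboundedUnder (· ≥ ·) atTop fun n => μs n G :=
        (IsBoundedUnder.isCoboundedUnder_ge
          ⟨1, eventually_map.mpr (Eventually.of_forall fun n =>
            ProbabilityMeasure.apply_le_one _ _)⟩)
      rw [← NNReal.coe_le_coe, hcoelim G hG.measurableSet]
      refine le_of_forall_pos_le_add fun ε hε => ?_
      obtain ⟨k, hkc⟩ : ∃ k, (ℙ (ξlim ⁻¹' G)).toReal - ε / 2 ≤ ∫ ω, hk k (ξlim ω) ∂ℙ := by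
        have := (hmono.eventually (eventually_ge_nhds
          (show (ℙ (ξlim ⁻¹' G)).toReal - ε / 2 < (ℙ (ξlim ⁻¹' G)).toReal by linarith))).exists
        exact this
      set c : NNReal := Real.toNNReal (∫ ω, hk k (ξlim ω) ∂ℙ - ε / 2) with hc
      have hcle : c ≤ atTop.liminf fun n => μs n G := by
        refine le_liminf_of_le hcob ?_
        filter_upwards [(hconv k).eventually (eventually_ge_nhds
          (show ∫ ω, hk k (ξlim ω) ∂ℙ - ε / 2 < ∫ ω, hk k (ξlim ω) ∂ℙ by linarith))] with n hn
        rw [← NNReal.coe_le_coe, hc, Real.coe_toNNReal', hcoe n G hG.measurableSet]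
        show max _ _ ≤ (ℙ (ξ n ⁻¹' G)).toReal
        exact max_le (le_trans hn (hle k n)) ENNReal.toReal_nonneg
      have hcc : (c : ℝ) ≥ ∫ ω, hk k (ξlim ω) ∂ℙ - ε / 2 := by
        rw [hc, Real.coe_toNNReal']
        exact le_max_left _ _
      have hfin : (c : ℝ) ≤ (↑(atTop.liminf fun n => μs n G) : ℝ) :=
        NNReal.coe_le_coe.mpr hcle
      show (ℙ (ξlim ⁻¹' G)).toReal ≤ _
      linarith
  intro g
  have hfin := ProbabilityMeasure.tendsto_iff_forall_integral_tendsto.mp key g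
  have e1 : ∀ n, ∫ x, g x ∂(μs n : Measure X) = ∫ ω, g (ξ n ω) ∂ℙ := fun n =>
    integral_map (hmeas n).aemeasurable g.continuous.aestronglyMeasurable
  have e2 : ∫ x, g x ∂(μ : Measure X) = ∫ ω, g (ξlim ω) ∂ℙ :=
    integral_map hmeaslim.aemeasurable g.continuous.aestronglyMeasurable
  simpa only [e1, e2] using hfin

lemma aux_norm_sub_sum_sq {E : Type*} [NormedAddCommGroup E] [InnerProductSpace ℂ E]
    {ι : Type*} {v : ι → E} (hv : Orthonormal ℂ v) (s : Finset ι) (x : E) :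
    ‖x - ∑ i ∈ s, ⟪v i, x⟫ • v i‖ ^ 2 = ‖x‖ ^ 2 - ∑ i ∈ s, ‖⟪v i, x⟫‖ ^ 2 := by
  have h₂ : (∑ i ∈ s, ∑ j ∈ s, ⟪v i, x⟫ * ⟪x, v j⟫ * ⟪v j, v i⟫)
      = (∑ k ∈ s, ⟪v k, x⟫ * ⟪x, v k⟫ : ℂ) := by
    classical exact hv.inner_left_right_finset
  have h₃ : ∀ z : ℂ, re (z * (starRingEnd ℂ) z) = ‖z‖ ^ 2 := by
    intro z
    simp only [mul_conj, normSq_eq_def']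
    norm_cast
  rw [@norm_sub_sq ℂ, sub_add]
  simp only [@norm_sq_eq_re_inner ℂ, inner_sum, sum_inner]
  simp only [inner_smul_right, two_mul, inner_smul_left, inner_conj_symm, ← mul_assoc, h₂,
    add_sub_cancel_right, sub_right_inj]
  simp only [map_sum, ← inner_conj_symm x, ← h₃]
  refine Finset.sum_congr rfl fun i _ => ?_
  rw [RCLike.inner_apply, mul_comm]

lemma aux_hasSum_sq {H : Type*} [NormedAddCommGroup H] [InnerProductSpace ℂ H]
    (f : HilbertBasis ℕ ℂ H) (x : H) :
    HasSum (fun i => ‖⟪f i, x⟫‖ ^ 2) (‖x‖ ^ 2) := by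
  have h := (f.hasSum_inner_mul_inner x x).mapL Complex.reCLM
  have e1 : ∀ i, Complex.reCLM (⟪x, f i⟫ * ⟪f i, x⟫) = ‖⟪f i, x⟫‖ ^ 2 := by
    intro i
    have : ⟪x, f i⟫ = (starRingEnd ℂ) ⟪f i, x⟫ := (inner_conj_symm _ _).symm
    rw [this]
    simp only [Complex.reCLM_apply]
    rw [mul_comm]
    exact (by simp only [mul_conj, normSq_eq_def']; norm_cast :
      re (⟪f i, x⟫ * (starRingEnd ℂ) ⟪f i, x⟫) = ‖⟪f i, x⟫‖ ^ 2)
  have e2 : Complex.reCLM ⟪x, x⟫ = ‖x‖ ^ 2 := by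
    simpa using (@inner_self_eq_norm_sq ℂ _ _ _ _ x)
  simpa only [e1, e2] using h

/-- abstract form of Lemma 4.1. If `ξ n → ξ` in distribution in the weaker
Polish space `E` (via the continuous injection `j`), the second moments converge, and the squared
norms are uniformly integrable, then `ξ n → ξ` in distribution in the Hilbert space `H`. -/
theorem stmt_0
    {H : Type*} [NormedAddCommGroup H] [InnerProductSpace ℂ H] [CompleteSpace H]
    [MeasurableSpace H] [BorelSpace H]
    {E : Type*} [TopologicalSpace E] [PolishSpace E] [MeasurableSpace E] [BorelSpace E]
    (f : HilbertBasis ℕ ℂ H)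
    (j : H → E) (hj_cont : Continuous j) (hj_inj : Function.Injective j)
    (φ : ℕ → E → ℂ) (hφ_cont : ∀ i, Continuous (φ i))
    (hφ : ∀ i (x : H), φ i (j x) = (inner ℂ x (f i) : ℂ))
    {Ω : Type*} [MeasurableSpace Ω] (ℙ : Measure Ω) [IsProbabilityMeasure ℙ]
    (ξ : ℕ → Ω → H) (ξlim : Ω → H)
    (hmeas : ∀ n, Measurable (ξ n)) (hmeaslim : Measurable ξlim)
    (hint : ∀ n, Integrable (fun ω => ‖ξ n ω‖ ^ 2) ℙ)
    (hintlim : Integrable (fun ω => ‖ξlim ω‖ ^ 2) ℙ)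
    -- (a) convergence in distribution in `E` of `j ∘ ξ n` to `j ∘ ξlim`
    (ha : ∀ g : BoundedContinuousFunction E ℝ,
      Tendsto (fun n => ∫ ω, g (j (ξ n ω)) ∂ℙ) atTop (𝓝 (∫ ω, g (j (ξlim ω)) ∂ℙ)))
    -- (b) convergence of the second moments
    (hb : Tendsto (fun n => ∫ ω, ‖ξ n ω‖ ^ 2 ∂ℙ) atTop (𝓝 (∫ ω, ‖ξlim ω‖ ^ 2 ∂ℙ)))
    -- (c) uniform integrability of the squared norms
    (hc : ∀ ε > (0 : ℝ), ∃ R > (0 : ℝ), ∀ n,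
      ∫ ω in {ω | R ≤ ‖ξ n ω‖ ^ 2}, ‖ξ n ω‖ ^ 2 ∂ℙ ≤ ε) :
    -- conclusion: convergence in distribution in `H`
    ∀ g : BoundedContinuousFunction H ℝ,
      Tendsto (fun n => ∫ ω, g (ξ n ω) ∂ℙ) atTop (𝓝 (∫ ω, g (ξlim ω) ∂ℙ)) := by
  classical
  apply aux_tendsto_of_lipschitz ℙ ξ ξlim hmeas hmeaslim
  intro L g hg
  -- the partial sums of squared Fourier coefficients
  set S : ℕ → H → ℝ := fun N x => ∑ i ∈ Finset.range N, ‖(inner ℂ (f i) x : ℂ)‖ ^ 2 with hSdef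
  have hS_nonneg : ∀ N x, 0 ≤ S N x := fun N x =>
    Finset.sum_nonneg fun i _ => by positivity
  have hS_le : ∀ N (x : H), S N x ≤ ‖x‖ ^ 2 := fun N x =>
    f.orthonormal.sum_inner_products_le x
  have hS_cont : ∀ N, Continuous (S N) := fun N =>
    continuous_finset_sum _ fun i _ => ((continuous_const.inner continuous_id).norm.pow 2)
  have hintS : ∀ N n, Integrable (fun ω => S N (ξ n ω)) ℙ := fun N n =>
    Integrable.mono' (hint n) (((hS_cont N).measurable.comp (hmeas n)).aestronglyMeasurable)
      (Eventually.of_forall fun ω => by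
        rw [Real.norm_eq_abs, abs_of_nonneg (hS_nonneg _ _)]; exact hS_le _ _)
  have hintSlim : ∀ N, Integrable (fun ω => S N (ξlim ω)) ℙ := fun N =>
    Integrable.mono' hintlim (((hS_cont N).measurable.comp hmeaslim).aestronglyMeasurable)
      (Eventually.of_forall fun ω => by
        rw [Real.norm_eq_abs, abs_of_nonneg (hS_nonneg _ _)]; exact hS_le _ _)
  have hmsq : Measurable fun ω => ‖ξlim ω‖ ^ 2 := hmeaslim.norm.pow_const 2
  have hmsqn : ∀ n, Measurable fun ω => ‖ξ n ω‖ ^ 2 := fun n => (hmeas n).norm.pow_const 2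
  -- tail control for the limit variable
  have hclim : ∀ ε > (0:ℝ), ∃ R > (0:ℝ),
      ∫ ω in {ω | R ≤ ‖ξlim ω‖ ^ 2}, ‖ξlim ω‖ ^ 2 ∂ℙ ≤ ε := by
    intro ε hε
    have htend : Tendsto
        (fun k : ℕ => ∫ ω, Set.indicator {ω | ((k:ℝ)+1) ≤ ‖ξlim ω‖ ^ 2}
          (fun ω => ‖ξlim ω‖ ^ 2) ω ∂ℙ) atTop (𝓝 (∫ ω, (0:ℝ) ∂ℙ)) := by
      refine tendsto_integral_of_dominated_convergence (fun ω => ‖ξlim ω‖ ^ 2)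
        (fun k => ((hmsq.indicator (measurableSet_le measurable_const hmsq))).aestronglyMeasurable)
        hintlim (fun k => Eventually.of_forall fun ω => ?_)
        (Eventually.of_forall fun ω => ?_)
      · rw [Real.norm_eq_abs]
        rcases Set.indicator_eq_zero_or_self {ω | ((k:ℝ)+1) ≤ ‖ξlim ω‖ ^ 2}
          (fun ω => ‖ξlim ω‖ ^ 2) ω with h | h <;> rw [h]
        · rw [abs_zero]; positivity
        · rw [abs_of_nonneg (by positivity)]
      · have hev : ∀ᶠ k : ℕ in atTop, Set.indicator {ω | ((k:ℝ)+1) ≤ ‖ξlim ω‖ ^ 2}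
            (fun ω => ‖ξlim ω‖ ^ 2) ω = 0 := by
          filter_upwards [eventually_ge_atTop ⌈‖ξlim ω‖ ^ 2⌉₊] with k hk
          refine Set.indicator_of_notMem ?_ _
          simp only [Set.mem_setOf_eq, not_le]
          have : ‖ξlim ω‖ ^ 2 ≤ (k:ℝ) := le_trans (Nat.le_ceil _) (by exact_mod_cast hk)
          linarith
        exact Tendsto.congr' (hev.mono fun k hk => hk.symm) tendsto_const_nhds
    rw [integral_zero] at htend
    obtain ⟨k, hk⟩ := (htend.eventually (eventually_le_nhds hε)).exists
    refine ⟨(k:ℝ)+1, by positivity, ?_⟩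
    rw [← integral_indicator (measurableSet_le measurable_const hmsq)]
    exact hk
  -- Step A: convergence of the integrals of the partial sums
  have stepA : ∀ N, Tendsto (fun n => ∫ ω, S N (ξ n ω) ∂ℙ) atTop
      (𝓝 (∫ ω, S N (ξlim ω) ∂ℙ)) := by
    intro N
    apply aux_tendsto_of_abs
    intro ε hε
    obtain ⟨R₁, hR₁pos, hR₁⟩ := hc (ε/3) (by linarith)
    obtain ⟨R₂, hR₂pos, hR₂⟩ := hclim (ε/3) (by linarith)
    set R := max R₁ R₂ with hRdef
    have hRpos : 0 < R := lt_max_of_lt_left hR₁pos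
    have hsub : ∀ (y : Ω → H) (R' : ℝ), R' ≤ R →
        {ω | R ≤ ‖y ω‖ ^ 2} ⊆ {ω | R' ≤ ‖y ω‖ ^ 2} :=
      fun y R' hR' ω hω => le_trans hR' hω
    have hRn : ∀ n, ∫ ω in {ω | R ≤ ‖ξ n ω‖ ^ 2}, ‖ξ n ω‖ ^ 2 ∂ℙ ≤ ε/3 := by
      intro n
      refine le_trans (setIntegral_mono_set (hint n).integrableOn
        (Eventually.of_forall fun ω => by positivity)
        (HasSubset.Subset.eventuallyLE (hsub (ξ n) R₁ (le_max_left _ _)))) (hR₁ n)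
    have hRlim : ∫ ω in {ω | R ≤ ‖ξlim ω‖ ^ 2}, ‖ξlim ω‖ ^ 2 ∂ℙ ≤ ε/3 :=
      le_trans (setIntegral_mono_set hintlim.integrableOn
        (Eventually.of_forall fun ω => by positivity)
        (HasSubset.Subset.eventuallyLE (hsub ξlim R₂ (le_max_right _ _)))) hR₂
    -- the truncated test function on E
    have hψb : ∀ e : E, ‖min (∑ i ∈ Finset.range N, ‖φ i e‖ ^ 2) R‖ ≤ R := by
      intro e
      have h0 : (0:ℝ) ≤ ∑ i ∈ Finset.range N, ‖φ i e‖ ^ 2 :=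
        Finset.sum_nonneg fun i _ => by positivity
      rw [Real.norm_eq_abs, abs_le]
      exact ⟨by have := le_min h0 (le_of_lt hRpos); linarith, min_le_right _ _⟩
    set ψ : BoundedContinuousFunction E ℝ :=
      BoundedContinuousFunction.ofNormedAddCommGroup _
        ((continuous_finset_sum _ fun i _ => ((hφ_cont i).norm.pow 2)).min continuous_const)
        R hψb with hψdef
    have hψj : ∀ x : H, ψ (j x) = min (S N x) R := by
      intro x
      show min _ R = min (S N x) R
      congr 1
      refine Finset.sum_congr rfl fun i _ => ?_
      show ‖φ i (j x)‖ ^ 2 = _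
      rw [hφ i x, ← norm_inner_symm]
    have trunc : ∀ (y : Ω → H), Measurable y → Integrable (fun ω => ‖y ω‖ ^ 2) ℙ →
        Integrable (fun ω => S N (y ω)) ℙ →
        (∫ ω in {ω | R ≤ ‖y ω‖ ^ 2}, ‖y ω‖ ^ 2 ∂ℙ ≤ ε/3) →
        |∫ ω, S N (y ω) ∂ℙ - ∫ ω, ψ (j (y ω)) ∂ℙ| ≤ ε/3 := by
      intro y hym hyint hySint hyR
      have hki : Integrable (fun ω => ψ (j (y ω))) ℙ :=
        aux_integrable_comp ℙ (hj_cont.measurable.comp hym) ψ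
      have hsetm : MeasurableSet {ω | R ≤ ‖y ω‖ ^ 2} :=
        measurableSet_le measurable_const (hym.norm.pow_const 2)
      rw [← integral_sub hySint hki]
      have h0 : ∀ ω, 0 ≤ S N (y ω) - ψ (j (y ω)) := by
        intro ω
        rw [hψj]
        exact sub_nonneg.mpr (min_le_left _ _)
      rw [abs_of_nonneg (integral_nonneg h0)]
      have hptw : ∀ ω, S N (y ω) - ψ (j (y ω))
          ≤ Set.indicator {ω | R ≤ ‖y ω‖ ^ 2} (fun ω => ‖y ω‖ ^ 2) ω := by
        intro ω
        rw [hψj]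
        rcases le_or_gt (S N (y ω)) R with hcase | hcase
        · rw [min_eq_left hcase, sub_self]
          exact Set.indicator_nonneg (fun ω _ => by positivity) ω
        · rw [min_eq_right (le_of_lt hcase)]
          have hmem : ω ∈ {ω | R ≤ ‖y ω‖ ^ 2} :=
            le_trans (le_of_lt hcase) (hS_le N (y ω))
          rw [Set.indicator_of_mem hmem]
          have := hS_le N (y ω)
          linarith
      calc ∫ ω, (S N (y ω) - ψ (j (y ω))) ∂ℙ
          ≤ ∫ ω, Set.indicator {ω | R ≤ ‖y ω‖ ^ 2} (fun ω => ‖y ω‖ ^ 2) ω ∂ℙ :=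
            integral_mono (hySint.sub hki) (hyint.indicator hsetm) hptw
        _ = ∫ ω in {ω | R ≤ ‖y ω‖ ^ 2}, ‖y ω‖ ^ 2 ∂ℙ := integral_indicator hsetm
        _ ≤ ε/3 := hyR
    filter_upwards [(Metric.tendsto_nhds.mp (ha ψ)) (ε/3) (by linarith)] with n hn
    have t1 := trunc (ξ n) (hmeas n) (hint n) (hintS N n) (hRn n)
    have t2 := trunc ξlim hmeaslim hintlim (hintSlim N) hRlim
    rw [Real.dist_eq] at hn
    have habs1 := abs_sub_le (∫ ω, S N (ξ n ω) ∂ℙ) (∫ ω, ψ (j (ξ n ω)) ∂ℙ)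
      (∫ ω, ψ (j (ξlim ω)) ∂ℙ)
    have habs2 := abs_sub_le (∫ ω, S N (ξ n ω) ∂ℙ) (∫ ω, ψ (j (ξlim ω)) ∂ℙ)
      (∫ ω, S N (ξlim ω) ∂ℙ)
    rw [abs_sub_comm] at t2
    linarith [le_of_lt hn]
  -- Step B: the integrals of the partial sums converge to the second moment (for the limit)
  have stepB : Tendsto (fun N => ∫ ω, S N (ξlim ω) ∂ℙ) atTop
      (𝓝 (∫ ω, ‖ξlim ω‖ ^ 2 ∂ℙ)) := by
    refine tendsto_integral_of_dominated_convergence (fun ω => ‖ξlim ω‖ ^ 2)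
      (fun N => (((hS_cont N).measurable.comp hmeaslim).aestronglyMeasurable))
      hintlim (fun N => Eventually.of_forall fun ω => ?_)
      (Eventually.of_forall fun ω => ?_)
    · rw [Real.norm_eq_abs, abs_of_nonneg (hS_nonneg _ _)]
      exact hS_le _ _
    · exact (aux_hasSum_sq f (ξlim ω)).tendsto_sum_nat
  -- Step C: conclude for the given Lipschitz function
  apply aux_tendsto_of_abs
  intro ε hε
  set η : ℝ := ε / (6 * ((L:ℝ) + 1)) with hηdef
  have hLnn : (0:ℝ) ≤ (L:ℝ) := L.coe_nonneg
  have hηpos : 0 < η := by positivity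
  have h6 : η * (6 * ((L:ℝ)+1)) = ε := by
    rw [hηdef]; field_simp
  have hLη : (L:ℝ) * η ≤ ε / 6 := by nlinarith
  obtain ⟨N, hN⟩ : ∃ N, |∫ ω, S N (ξlim ω) ∂ℙ - ∫ ω, ‖ξlim ω‖ ^ 2 ∂ℙ| ≤ η^2/2 := by
    have := (Metric.tendsto_nhds.mp stepB) (η^2/2) (by positivity)
    obtain ⟨N, hN⟩ := this.exists
    exact ⟨N, by rw [Real.dist_eq] at hN; linarith⟩
  have htail : ∀ᶠ n in atTop,
      ∫ ω, ‖ξ n ω‖ ^ 2 ∂ℙ - ∫ ω, S N (ξ n ω) ∂ℙ ≤ η^2 := by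
    have hdiff : Tendsto (fun n => ∫ ω, ‖ξ n ω‖ ^ 2 ∂ℙ - ∫ ω, S N (ξ n ω) ∂ℙ) atTop
        (𝓝 (∫ ω, ‖ξlim ω‖ ^ 2 ∂ℙ - ∫ ω, S N (ξlim ω) ∂ℙ)) := hb.sub (stepA N)
    refine hdiff.eventually (eventually_le_nhds ?_)
    have := abs_le.mp hN
    have hη2 : 0 < η^2 := by positivity
    linarith
  -- the finite-dimensional projection, factored through E
  have hGcont : Continuous fun e : E => ∑ i ∈ Finset.range N, (starRingEnd ℂ (φ i e)) • f i :=
    continuous_finset_sum _ fun i _ =>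
      ((continuous_star.comp (hφ_cont i)).smul continuous_const)
  set gG : BoundedContinuousFunction E ℝ := g.compContinuous ⟨_, hGcont⟩ with hgGdef
  have hgG : ∀ x : H, gG (j x)
      = g (∑ i ∈ Finset.range N, (inner ℂ (f i) x : ℂ) • f i) := by
    intro x
    show g (∑ i ∈ Finset.range N, (starRingEnd ℂ (φ i (j x))) • f i) = _
    congr 1
    refine Finset.sum_congr rfl fun i _ => ?_
    rw [hφ i x]
    congr 1
    exact inner_conj_symm (f i) x
  -- pointwise bound
  have hptb : ∀ x : H, |g x - g (∑ i ∈ Finset.range N, (inner ℂ (f i) x : ℂ) • f i)|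
      ≤ (L:ℝ) * η + ((L:ℝ)/η) * (‖x‖ ^ 2 - S N x) := by
    intro x
    set y : H := ∑ i ∈ Finset.range N, (inner ℂ (f i) x : ℂ) • f i with hydef
    have hd : dist (g x) (g y) ≤ (L:ℝ) * dist x y := hg.dist_le_mul x y
    have hsq : ‖x - y‖ ^ 2 = ‖x‖ ^ 2 - S N x := by
      rw [hydef, hSdef]
      exact aux_norm_sub_sum_sq f.orthonormal (Finset.range N) x
    have key : ‖x - y‖ ≤ η + ‖x - y‖ ^ 2 / η := by
      rcases le_or_gt ‖x - y‖ η with hle | hlt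
      · have : 0 ≤ ‖x - y‖ ^ 2 / η := by positivity
        linarith
      · have h1 : ‖x - y‖ ≤ ‖x - y‖ ^ 2 / η := by
          rw [le_div_iff₀ hηpos]
          nlinarith [norm_nonneg (x - y)]
        linarith
    calc |g x - g y| = dist (g x) (g y) := (Real.dist_eq _ _).symm
      _ ≤ (L:ℝ) * dist x y := hd
      _ = (L:ℝ) * ‖x - y‖ := by rw [dist_eq_norm]
      _ ≤ (L:ℝ) * (η + (‖x‖ ^ 2 - S N x) / η) := by
          refine mul_le_mul_of_nonneg_left ?_ hLnn
          rw [← hsq]; exact key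
      _ = (L:ℝ) * η + ((L:ℝ)/η) * (‖x‖ ^ 2 - S N x) := by ring
  -- integrated bound
  have hIb : ∀ (y : Ω → H), Measurable y → Integrable (fun ω => ‖y ω‖ ^ 2) ℙ →
      Integrable (fun ω => S N (y ω)) ℙ →
      |∫ ω, g (y ω) ∂ℙ - ∫ ω, gG (j (y ω)) ∂ℙ|
        ≤ (L:ℝ) * η + ((L:ℝ)/η) * (∫ ω, ‖y ω‖ ^ 2 ∂ℙ - ∫ ω, S N (y ω) ∂ℙ) := by
    intro y hym hyint hySint
    have i1 : Integrable (fun ω => g (y ω)) ℙ := aux_integrable_comp ℙ hym g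
    have i2 : Integrable (fun ω => gG (j (y ω))) ℙ :=
      aux_integrable_comp ℙ (hj_cont.measurable.comp hym) gG
    rw [← integral_sub i1 i2]
    have habs : |∫ ω, (g (y ω) - gG (j (y ω))) ∂ℙ| ≤ ∫ ω, |g (y ω) - gG (j (y ω))| ∂ℙ := by
      simpa [Real.norm_eq_abs] using
        norm_integral_le_integral_norm (μ := ℙ) (fun ω => g (y ω) - gG (j (y ω)))
    refine le_trans habs ?_
    have hbnd : ∀ ω, |g (y ω) - gG (j (y ω))|
        ≤ (L:ℝ) * η + ((L:ℝ)/η) * (‖y ω‖ ^ 2 - S N (y ω)) := by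
      intro ω
      rw [hgG]
      exact hptb (y ω)
    calc ∫ ω, |g (y ω) - gG (j (y ω))| ∂ℙ
        ≤ ∫ ω, ((L:ℝ) * η + ((L:ℝ)/η) * (‖y ω‖ ^ 2 - S N (y ω))) ∂ℙ :=
          integral_mono (i1.sub i2).abs
            ((integrable_const _).add ((hyint.sub hySint).const_mul _)) hbnd
      _ = (L:ℝ) * η + ((L:ℝ)/η) * (∫ ω, ‖y ω‖ ^ 2 ∂ℙ - ∫ ω, S N (y ω) ∂ℙ) := by
          have isub : Integrable (fun ω => ‖y ω‖ ^ 2 - S N (y ω)) ℙ := hyint.sub hySint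
          have iadd : Integrable (fun ω => ((L:ℝ)/η) * (‖y ω‖ ^ 2 - S N (y ω))) ℙ :=
            isub.const_mul _
          rw [integral_add (integrable_const _) iadd,
            integral_const, integral_const_mul, integral_sub hyint hySint]
          simp [measure_univ]
  -- finish
  filter_upwards [htail, (Metric.tendsto_nhds.mp (ha gG)) (ε/3) (by linarith)] with n hn1 hn2
  rw [Real.dist_eq] at hn2
  have b1 := hIb (ξ n) (hmeas n) (hint n) (hintS N n)
  have b2 := hIb ξlim hmeaslim hintlim (hintSlim N)
  have hLηdiv : (0:ℝ) ≤ (L:ℝ)/η := by positivity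
  have hb1' : |∫ ω, g (ξ n ω) ∂ℙ - ∫ ω, gG (j (ξ n ω)) ∂ℙ| ≤ ε/3 := by
    have h2 : ((L:ℝ)/η) * (∫ ω, ‖ξ n ω‖ ^ 2 ∂ℙ - ∫ ω, S N (ξ n ω) ∂ℙ)
        ≤ ((L:ℝ)/η) * η^2 := mul_le_mul_of_nonneg_left hn1 hLηdiv
    have h3 : ((L:ℝ)/η) * η^2 = (L:ℝ) * η := by
      field_simp
    linarith
  have hb2' : |∫ ω, g (ξlim ω) ∂ℙ - ∫ ω, gG (j (ξlim ω)) ∂ℙ| ≤ ε/3 := by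
    have hlt : ∫ ω, ‖ξlim ω‖ ^ 2 ∂ℙ - ∫ ω, S N (ξlim ω) ∂ℙ ≤ η^2 := by
      have := abs_le.mp hN
      have hη2 : 0 < η^2 := by positivity
      linarith
    have h2 : ((L:ℝ)/η) * (∫ ω, ‖ξlim ω‖ ^ 2 ∂ℙ - ∫ ω, S N (ξlim ω) ∂ℙ)
        ≤ ((L:ℝ)/η) * η^2 := mul_le_mul_of_nonneg_left hlt hLηdiv
    have h3 : ((L:ℝ)/η) * η^2 = (L:ℝ) * η := by
      field_simp
    linarith
  have habs1 := abs_sub_le (∫ ω, g (ξ n ω) ∂ℙ) (∫ ω, gG (j (ξ n ω)) ∂ℙ)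
    (∫ ω, gG (j (ξlim ω)) ∂ℙ)
  have habs2 := abs_sub_le (∫ ω, g (ξ n ω) ∂ℙ) (∫ ω, gG (j (ξlim ω)) ∂ℙ)
    (∫ ω, g (ξlim ω) ∂ℙ)
  rw [abs_sub_comm] at hb2'
  linarith [le_of_lt hn2]
end

section
/- Let H be a separable complex Hilbert space with Hilbert basis (f_i)_{i∈ℕ}, and let ξ_n (n ∈ ℕ) and ξ be H-valued random variables on a probability space (Ω, F, ℙ) with E[‖ξ_n‖²_H] < ∞ for all n and E[‖ξ‖²_H] < ∞. Assume: (a) the family {‖ξ_n‖²_H : n ∈ ℕ} is uniformly integrable; (b) E[‖ξ_n‖²_H] → E[‖ξ‖²_H] as n → ∞; and (c) for every N ∈ ℕ and every R > 0, E[min(Σ_{i<N} |⟨ξ_n, f_i⟩|², R)] → E[min(Σ_{i<N} |⟨ξ, f_i⟩|², R)] as n → ∞. Then lim_{N→∞} sup_{n∈ℕ} E[Σ_{i≥N} |⟨ξ_n, f_i⟩|²] = 0. -/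
open MeasureTheory Filter Topology

section aux
set_option linter.unusedSectionVars false

variable {H : Type*} [NormedAddCommGroup H] [InnerProductSpace ℂ H] [CompleteSpace H]
  (f : HilbertBasis ℕ ℂ H)

lemma my_parseval (x : H) :
    HasSum (fun i => ‖(inner ℂ x (f i) : ℂ)‖ ^ 2) (‖x‖ ^ 2) := by
  have h := f.hasSum_inner_mul_inner x x
  have h2 : ∀ i, (inner ℂ x (f i) : ℂ) * inner ℂ (f i) x = ((‖(inner ℂ x (f i) : ℂ)‖ ^ 2 : ℝ) : ℂ) := by
    intro i
    rw [← inner_conj_symm x (f i), RCLike.conj_mul (K := ℂ), RCLike.norm_conj]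
    norm_cast
  simp only [h2, inner_self_eq_norm_sq_to_K] at h
  norm_cast at h
  exact Complex.hasSum_ofReal.mp h

lemma my_S_nonneg (N : ℕ) (x : H) :
    (0:ℝ) ≤ ∑ i ∈ Finset.range N, ‖(inner ℂ x (f i) : ℂ)‖ ^ 2 :=
  Finset.sum_nonneg fun _ _ => sq_nonneg _

lemma my_S_le (N : ℕ) (x : H) :
    ∑ i ∈ Finset.range N, ‖(inner ℂ x (f i) : ℂ)‖ ^ 2 ≤ ‖x‖ ^ 2 :=
  sum_le_hasSum _ (fun _ _ => sq_nonneg _) (my_parseval f x)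

lemma my_S_mono {N N' : ℕ} (h : N ≤ N') (x : H) :
    ∑ i ∈ Finset.range N, ‖(inner ℂ x (f i) : ℂ)‖ ^ 2
      ≤ ∑ i ∈ Finset.range N', ‖(inner ℂ x (f i) : ℂ)‖ ^ 2 :=
  Finset.sum_le_sum_of_subset_of_nonneg (Finset.range_subset_range.mpr h)
    (fun _ _ _ => sq_nonneg _)

lemma my_tail_eq (N : ℕ) (x : H) :
    (∑' i : ℕ, if N ≤ i then ‖(inner ℂ x (f i) : ℂ)‖ ^ 2 else 0)
      = ‖x‖ ^ 2 - ∑ i ∈ Finset.range N, ‖(inner ℂ x (f i) : ℂ)‖ ^ 2 := by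
  have hp := my_parseval f x
  have hfin : HasSum (fun i => if N ≤ i then 0 else ‖(inner ℂ x (f i) : ℂ)‖ ^ 2)
      (∑ i ∈ Finset.range N, ‖(inner ℂ x (f i) : ℂ)‖ ^ 2) := by
    have h1 : HasSum (fun i => if N ≤ i then 0 else ‖(inner ℂ x (f i) : ℂ)‖ ^ 2)
        (∑ i ∈ Finset.range N, if N ≤ i then 0 else ‖(inner ℂ x (f i) : ℂ)‖ ^ 2) := by
      apply hasSum_sum_of_ne_finset_zero
      intro i hi
      simp only [Finset.mem_range, not_lt] at hi
      simp [hi]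
    have h2 : (∑ i ∈ Finset.range N, if N ≤ i then 0 else ‖(inner ℂ x (f i) : ℂ)‖ ^ 2)
        = ∑ i ∈ Finset.range N, ‖(inner ℂ x (f i) : ℂ)‖ ^ 2 := by
      apply Finset.sum_congr rfl
      intro i hi
      simp only [Finset.mem_range] at hi
      simp [Nat.not_le.mpr hi]
    rwa [h2] at h1
  have hsub := hp.sub hfin
  have heq : (fun i => ‖(inner ℂ x (f i) : ℂ)‖ ^ 2 - if N ≤ i then 0 else ‖(inner ℂ x (f i) : ℂ)‖ ^ 2)
      = fun i => if N ≤ i then ‖(inner ℂ x (f i) : ℂ)‖ ^ 2 else 0 := by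
    funext i
    by_cases h : N ≤ i <;> simp [h]
  rw [heq] at hsub
  exact hsub.tsum_eq

end aux

/-- uniform tail estimate (4.2) from the proof of Lemma 4.1. Under uniform
integrability of `‖ξ n‖²`, convergence of the second moments, and convergence of the truncated
expectations of the partial sums of Fourier coefficients, the tails of the Fourier expansions of
`ξ n` are uniformly small in expectation. -/
theorem stmt_1
    {H : Type*} [NormedAddCommGroup H] [InnerProductSpace ℂ H] [CompleteSpace H]
    [MeasurableSpace H] [BorelSpace H]
    (f : HilbertBasis ℕ ℂ H)
    {Ω : Type*} [MeasurableSpace Ω] (ℙ : Measure Ω) [IsProbabilityMeasure ℙ]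
    (ξ : ℕ → Ω → H) (ξlim : Ω → H)
    (hmeas : ∀ n, Measurable (ξ n)) (hmeaslim : Measurable ξlim)
    (hint : ∀ n, Integrable (fun ω => ‖ξ n ω‖ ^ 2) ℙ)
    (hintlim : Integrable (fun ω => ‖ξlim ω‖ ^ 2) ℙ)
    -- (a) uniform integrability of the squared norms
    (ha : ∀ ε > (0 : ℝ), ∃ R > (0 : ℝ), ∀ n,
      ∫ ω in {ω | R ≤ ‖ξ n ω‖ ^ 2}, ‖ξ n ω‖ ^ 2 ∂ℙ ≤ ε)
    -- (b) convergence of the second moments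
    (hb : Tendsto (fun n => ∫ ω, ‖ξ n ω‖ ^ 2 ∂ℙ) atTop (𝓝 (∫ ω, ‖ξlim ω‖ ^ 2 ∂ℙ)))
    -- (c) convergence of truncated partial sums of squared Fourier coefficients
    (hc : ∀ N : ℕ, ∀ R > (0 : ℝ),
      Tendsto
        (fun n => ∫ ω, min (∑ i ∈ Finset.range N, ‖(inner ℂ (ξ n ω) (f i) : ℂ)‖ ^ 2) R ∂ℙ)
        atTop
        (𝓝 (∫ ω, min (∑ i ∈ Finset.range N, ‖(inner ℂ (ξlim ω) (f i) : ℂ)‖ ^ 2) R ∂ℙ))) :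
    -- conclusion: `lim_{N→∞} sup_n E[∑_{i≥N} |⟨ξ_n, f_i⟩|²] = 0`
    ∀ ε > (0 : ℝ), ∃ N₀ : ℕ, ∀ N ≥ N₀, ∀ n,
      ∫ ω, (∑' i : ℕ, if N ≤ i then ‖(inner ℂ (ξ n ω) (f i) : ℂ)‖ ^ 2 else 0) ∂ℙ ≤ ε := by
  intro ε hε
  -- abbreviations
  set S : ℕ → H → ℝ := fun N x => ∑ i ∈ Finset.range N, ‖(inner ℂ x (f i) : ℂ)‖ ^ 2 with hS
  -- measurability of partial sums
  have measS : ∀ N, ∀ (g : Ω → H), Measurable g → Measurable (fun ω => S N (g ω)) := by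
    intro N g hg
    apply Finset.measurable_sum
    intro i _
    exact (((Continuous.inner continuous_id (continuous_const : Continuous fun _ : H => f i)).measurable.comp hg)).norm.pow measurable_const
  -- integrability of partial sums
  have hSint : ∀ n N, Integrable (fun ω => S N (ξ n ω)) ℙ := by
    intro n N
    refine (hint n).mono' ((measS N (ξ n) (hmeas n)).aestronglyMeasurable) ?_
    filter_upwards with ω
    rw [Real.norm_eq_abs, abs_of_nonneg (my_S_nonneg f N _)]
    exact my_S_le f N _
  have hSintlim : ∀ N, Integrable (fun ω => S N (ξlim ω)) ℙ := by
    intro N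
    refine hintlim.mono' ((measS N ξlim hmeaslim).aestronglyMeasurable) ?_
    filter_upwards with ω
    rw [Real.norm_eq_abs, abs_of_nonneg (my_S_nonneg f N _)]
    exact my_S_le f N _
  -- integrability of min
  have hMint : ∀ N (R : ℝ), 0 ≤ R → ∀ (g : Ω → H), Measurable g →
      Integrable (fun ω => min (S N (g ω)) R) ℙ := by
    intro N R hR g hg
    refine (integrable_const R).mono' (((measS N g hg).min measurable_const).aestronglyMeasurable) ?_
    filter_upwards with ω
    rw [Real.norm_eq_abs, abs_of_nonneg (le_min (my_S_nonneg f N _) hR)]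
    exact min_le_right _ _
  -- the tail integral as a difference
  have tail_int : ∀ (g : Ω → H), Measurable g → Integrable (fun ω => ‖g ω‖ ^ 2) ℙ → ∀ N,
      ∫ ω, (∑' i : ℕ, if N ≤ i then ‖(inner ℂ (g ω) (f i) : ℂ)‖ ^ 2 else 0) ∂ℙ
        = (∫ ω, ‖g ω‖ ^ 2 ∂ℙ) - ∫ ω, S N (g ω) ∂ℙ := by
    intro g hg hgint N
    have : (fun ω => (∑' i : ℕ, if N ≤ i then ‖(inner ℂ (g ω) (f i) : ℂ)‖ ^ 2 else 0))
        = fun ω => ‖g ω‖ ^ 2 - S N (g ω) := by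
      funext ω; exact my_tail_eq f N (g ω)
    rw [this, integral_sub hgint]
    · exact hgint.mono' ((measS N g hg).aestronglyMeasurable) (by
        filter_upwards with ω
        rw [Real.norm_eq_abs, abs_of_nonneg (my_S_nonneg f N _)]
        exact my_S_le f N _)
  -- pointwise convergence of partial sums
  have hSptw : ∀ x : H, Tendsto (fun N => S N x) atTop (𝓝 (‖x‖ ^ 2)) := by
    intro x
    exact (my_parseval f x).tendsto_sum_nat
  -- Step 1: choose R
  have hRlim : Tendsto (fun k : ℕ => ∫ ω, min (‖ξlim ω‖ ^ 2) (k : ℝ) ∂ℙ) atTop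
      (𝓝 (∫ ω, ‖ξlim ω‖ ^ 2 ∂ℙ)) := by
    apply tendsto_integral_of_dominated_convergence (fun ω => ‖ξlim ω‖ ^ 2)
    · intro k
      exact ((hmeaslim.norm.pow measurable_const).min measurable_const).aestronglyMeasurable
    · exact hintlim
    · intro k
      filter_upwards with ω
      rw [Real.norm_eq_abs, abs_of_nonneg (le_min (sq_nonneg _) (by positivity))]
      exact min_le_left _ _
    · filter_upwards with ω
      apply tendsto_const_nhds.congr'
      filter_upwards [eventually_ge_atTop ⌈‖ξlim ω‖ ^ 2⌉₊] with k hk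
      exact (min_eq_left ((Nat.le_ceil _).trans (Nat.cast_le.mpr hk))).symm
  obtain ⟨k₀, hk₀, hk₀1⟩ := ((hRlim.eventually
    (eventually_ge_nhds (show (∫ ω, ‖ξlim ω‖ ^ 2 ∂ℙ) - ε/4 < ∫ ω, ‖ξlim ω‖ ^ 2 ∂ℙ by linarith))).and
    (eventually_ge_atTop 1)).exists
  set R : ℝ := (k₀ : ℝ) with hRdef
  have hRpos : (0:ℝ) < R := by
    have : (1:ℝ) ≤ (k₀:ℝ) := by exact_mod_cast hk₀1
    linarith
  -- Step 2: choose N₁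
  have hNlim : Tendsto (fun N => ∫ ω, min (S N (ξlim ω)) R ∂ℙ) atTop
      (𝓝 (∫ ω, min (‖ξlim ω‖ ^ 2) R ∂ℙ)) := by
    apply tendsto_integral_of_dominated_convergence (fun _ => R)
    · intro N
      exact ((measS N ξlim hmeaslim).min measurable_const).aestronglyMeasurable
    · exact integrable_const R
    · intro N
      filter_upwards with ω
      rw [Real.norm_eq_abs, abs_of_nonneg (le_min (my_S_nonneg f N _) hRpos.le)]
      exact min_le_right _ _
    · filter_upwards with ω
      exact (hSptw (ξlim ω)).min tendsto_const_nhds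
  obtain ⟨N₁, hN₁⟩ := (hNlim.eventually (eventually_ge_nhds
    (show (∫ ω, min (‖ξlim ω‖ ^ 2) R ∂ℙ) - ε/4 < ∫ ω, min (‖ξlim ω‖ ^ 2) R ∂ℙ by linarith))).exists
  -- Step 3: choose M using (b) and (c)
  have hbM := hb.eventually (eventually_le_nhds
    (show (∫ ω, ‖ξlim ω‖ ^ 2 ∂ℙ) < (∫ ω, ‖ξlim ω‖ ^ 2 ∂ℙ) + ε/4 by linarith))
  have hcM := (hc N₁ R hRpos).eventually (eventually_ge_nhds
    (show (∫ ω, min (S N₁ (ξlim ω)) R ∂ℙ) - ε/4 < ∫ ω, min (S N₁ (ξlim ω)) R ∂ℙ by linarith))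
  obtain ⟨M, hM⟩ := (hbM.and hcM).exists_forall_of_atTop
  -- Step 4: for each n, the tail integral tends to 0 as N → ∞
  have hsmall : ∀ n, ∃ Nn, ∀ N ≥ Nn,
      ∫ ω, (∑' i : ℕ, if N ≤ i then ‖(inner ℂ (ξ n ω) (f i) : ℂ)‖ ^ 2 else 0) ∂ℙ ≤ ε := by
    intro n
    have hS2 : Tendsto (fun N => ∫ ω, S N (ξ n ω) ∂ℙ) atTop (𝓝 (∫ ω, ‖ξ n ω‖ ^ 2 ∂ℙ)) := by
      apply tendsto_integral_of_dominated_convergence (fun ω => ‖ξ n ω‖ ^ 2)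
      · intro N
        exact (measS N (ξ n) (hmeas n)).aestronglyMeasurable
      · exact hint n
      · intro N
        filter_upwards with ω
        rw [Real.norm_eq_abs, abs_of_nonneg (my_S_nonneg f N _)]
        exact my_S_le f N _
      · filter_upwards with ω
        exact hSptw (ξ n ω)
    have htail : Tendsto
        (fun N => ∫ ω, (∑' i : ℕ, if N ≤ i then ‖(inner ℂ (ξ n ω) (f i) : ℂ)‖ ^ 2 else 0) ∂ℙ)
        atTop (𝓝 0) := by
      have hdiff : Tendsto (fun N => (∫ ω, ‖ξ n ω‖ ^ 2 ∂ℙ) - ∫ ω, S N (ξ n ω) ∂ℙ) atTop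
          (𝓝 ((∫ ω, ‖ξ n ω‖ ^ 2 ∂ℙ) - ∫ ω, ‖ξ n ω‖ ^ 2 ∂ℙ)) := tendsto_const_nhds.sub hS2
      rw [sub_self] at hdiff
      apply hdiff.congr
      intro N
      exact (tail_int (ξ n) (hmeas n) (hint n) N).symm
    have := htail.eventually (eventually_le_nhds hε)
    rw [eventually_atTop] at this
    obtain ⟨Nn, hNn⟩ := this
    exact ⟨Nn, fun N hN => hNn N hN⟩
  choose Nf hNf using hsmall
  refine ⟨max N₁ ((Finset.range M).sup Nf), fun N hN n => ?_⟩
  by_cases hn : n < M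
  · exact hNf n N (le_trans (le_trans (Finset.le_sup (Finset.mem_range.mpr hn)) (le_max_right _ _)) hN)
  · push_neg at hn
    obtain ⟨hb', hc'⟩ := hM n hn
    rw [tail_int (ξ n) (hmeas n) (hint n) N]
    -- monotonicity in N : S N₁ ≤ S N
    have hN₁N : N₁ ≤ N := le_trans (le_max_left _ _) hN
    have step1 : ∫ ω, min (S N₁ (ξ n ω)) R ∂ℙ ≤ ∫ ω, S N (ξ n ω) ∂ℙ := by
      apply integral_mono (hMint N₁ R hRpos.le (ξ n) (hmeas n)) (hSint n N)
      intro ω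
      exact le_trans (min_le_left _ _) (my_S_mono f hN₁N (ξ n ω))
    have hc'' : (∫ ω, min (S N₁ (ξlim ω)) R ∂ℙ) - ε/4 ≤ ∫ ω, min (S N₁ (ξ n ω)) R ∂ℙ := hc'
    linarith [hk₀, hN₁, hb', hc'', step1]
end

section
/- Let X be a Polish space with its Borel σ-algebra, and let (P_t)_{t≥0} be a family of Markov kernels from X to X such that: P_0(x,·) is the Dirac measure at x; for all s, t ≥ 0, all x ∈ X and all Borel A, P_{t+s}(x, A) = ∫_X P_s(y, A) P_t(x, dy) (the Chapman–Kolmogorov property); and for every x ∈ X and Borel A, the map t ↦ P_t(x, A) is Borel measurable. Fix x₀ ∈ X and suppose: (i) the family {P_k(x₀, ·) : k ∈ ℕ} is tight; and (ii) for every compact set K ⊆ X, the family {P_s(v, ·) : s ∈ [0,1], v ∈ K} is tight. Then the probability measures μ_n defined for n ≥ 1 by μ_n(A) := (1/n) ∫_0^n P_t(x₀, A) dt form a tight family. -/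
open MeasureTheory ProbabilityTheory Filter Topology
open scoped ENNReal

/-- tightness of the Krylov–Bogolyubov averages, from the proof of
Theorem 3.2. If the integer-time transition probabilities `P_k(x₀, ·)` are tight, and the
transition probabilities over times `s ∈ [0,1]` started from a compact set are tight, then the
time averages `μ_n = (1/n) ∫_0^n P_t(x₀, ·) dt` form a tight family. -/
theorem stmt_3
    {X : Type*} [TopologicalSpace X] [PolishSpace X] [MeasurableSpace X] [BorelSpace X]
    (P : ℝ → Kernel X X)
    (hMarkov : ∀ t : ℝ, 0 ≤ t → IsMarkovKernel (P t))
    (hP0 : ∀ x : X, (P 0) x = Measure.dirac x)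
    (hCK : ∀ s t : ℝ, 0 ≤ s → 0 ≤ t → ∀ (x : X) (A : Set X), MeasurableSet A →
      (P (t + s)) x A = ∫⁻ y, (P s) y A ∂((P t) x))
    (hmeas : ∀ (x : X) (A : Set X), MeasurableSet A → Measurable (fun t : ℝ => (P t) x A))
    (x₀ : X)
    -- (i) tightness of `{P_k(x₀,·) : k ∈ ℕ}`
    (h1 : ∀ ε > (0 : ℝ), ∃ K : Set X, IsCompact K ∧
      ∀ k : ℕ, (P k) x₀ Kᶜ ≤ ENNReal.ofReal ε)
    -- (ii) tightness of `{P_s(v,·) : s ∈ [0,1], v ∈ K}` for every compact `K`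
    (h2 : ∀ K : Set X, IsCompact K → ∀ ε > (0 : ℝ), ∃ K' : Set X, IsCompact K' ∧
      ∀ s ∈ Set.Icc (0 : ℝ) 1, ∀ v ∈ K, (P s) v K'ᶜ ≤ ENNReal.ofReal ε)
    -- the averaged measures `μ_n(A) = (1/n) ∫_0^n P_t(x₀, A) dt`
    (μ : ℕ → Measure X)
    (hμprob : ∀ n : ℕ, 1 ≤ n → IsProbabilityMeasure (μ n))
    (hμ : ∀ n : ℕ, 1 ≤ n → ∀ A : Set X, MeasurableSet A →
      μ n A = ((n : ℝ≥0∞))⁻¹ * ∫⁻ t in Set.Ioc (0 : ℝ) (n : ℝ), (P t) x₀ A) :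
    ∀ ε > (0 : ℝ), ∃ K : Set X, IsCompact K ∧ ∀ n : ℕ, 1 ≤ n → μ n Kᶜ ≤ ENNReal.ofReal ε := by

  intro ε hε
  obtain ⟨K₁, hK₁c, hK₁⟩ := h1 (ε / 2) (by linarith)
  obtain ⟨K', hK'c, hK'⟩ := h2 K₁ hK₁c (ε / 2) (by linarith)
  refine ⟨K', hK'c, fun n hn => ?_⟩
  have hK'm : MeasurableSet K'ᶜ := hK'c.isClosed.measurableSet.compl
  have hK₁m : MeasurableSet K₁ := hK₁c.isClosed.measurableSet
  have key : ∀ t ∈ Set.Ioc (0 : ℝ) (n : ℝ), (P t) x₀ K'ᶜ ≤ ENNReal.ofReal ε := by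
    rintro t ⟨ht0, htn⟩
    set k : ℕ := ⌈t⌉₊ - 1 with hk
    have hceil : 1 ≤ ⌈t⌉₊ := Nat.one_le_ceil_iff.mpr ht0
    have hk1 : (k : ℝ) + 1 = (⌈t⌉₊ : ℝ) := by
      have : k + 1 = ⌈t⌉₊ := Nat.succ_pred_eq_of_pos hceil
      exact_mod_cast this
    have hkt : (k : ℝ) < t := Nat.lt_ceil.mp (Nat.sub_lt hceil one_pos)
    have hs1 : t - k ≤ 1 := by have := Nat.le_ceil t; linarith
    have hs0 : 0 ≤ t - k := by linarith
    haveI := hMarkov (t - k) hs0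
    haveI := hMarkov (k : ℝ) (Nat.cast_nonneg k)
    have hck := hCK (t - k) k hs0 (Nat.cast_nonneg k) x₀ K'ᶜ hK'm
    have heq : (k : ℝ) + (t - k) = t := by ring
    rw [heq] at hck
    rw [hck]
    have hsplit := lintegral_add_compl (fun y => (P (t - k)) y K'ᶜ) hK₁m
      (μ := (P (k : ℝ)) x₀)
    rw [← hsplit]
    have hb1 : ∫⁻ y in K₁, (P (t - k)) y K'ᶜ ∂((P (k : ℝ)) x₀) ≤ ENNReal.ofReal (ε / 2) := by
      calc ∫⁻ y in K₁, (P (t - k)) y K'ᶜ ∂((P (k : ℝ)) x₀)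
          ≤ ∫⁻ _ in K₁, ENNReal.ofReal (ε / 2) ∂((P (k : ℝ)) x₀) := by
            refine setLIntegral_mono measurable_const fun y hy => ?_
            exact hK' (t - k) ⟨hs0, hs1⟩ y hy
        _ = ENNReal.ofReal (ε / 2) * (P (k : ℝ)) x₀ K₁ := setLIntegral_const _ _
        _ ≤ ENNReal.ofReal (ε / 2) * 1 := by
            exact mul_le_mul_right prob_le_one _
        _ = ENNReal.ofReal (ε / 2) := mul_one _
    have hb2 : ∫⁻ y in K₁ᶜ, (P (t - k)) y K'ᶜ ∂((P (k : ℝ)) x₀) ≤ ENNReal.ofReal (ε / 2) := by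
      calc ∫⁻ y in K₁ᶜ, (P (t - k)) y K'ᶜ ∂((P (k : ℝ)) x₀)
          ≤ ∫⁻ _ in K₁ᶜ, 1 ∂((P (k : ℝ)) x₀) := by
            refine setLIntegral_mono measurable_const fun y _ => prob_le_one
        _ = 1 * (P (k : ℝ)) x₀ K₁ᶜ := setLIntegral_const _ _
        _ = (P (k : ℝ)) x₀ K₁ᶜ := one_mul _
        _ ≤ ENNReal.ofReal (ε / 2) := hK₁ k
    calc ∫⁻ y in K₁, (P (t - k)) y K'ᶜ ∂((P (k : ℝ)) x₀)
          + ∫⁻ y in K₁ᶜ, (P (t - k)) y K'ᶜ ∂((P (k : ℝ)) x₀)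
        ≤ ENNReal.ofReal (ε / 2) + ENNReal.ofReal (ε / 2) := add_le_add hb1 hb2
      _ = ENNReal.ofReal ε := by
          rw [← ENNReal.ofReal_add (by linarith) (by linarith)]; ring_nf
  rw [hμ n hn K'ᶜ hK'm]
  have hn0 : ((n : ℝ≥0∞)) ≠ 0 := by
    simp only [ne_eq, Nat.cast_eq_zero]; omega
  calc ((n : ℝ≥0∞))⁻¹ * ∫⁻ t in Set.Ioc (0 : ℝ) (n : ℝ), (P t) x₀ K'ᶜ
      ≤ ((n : ℝ≥0∞))⁻¹ * ∫⁻ _ in Set.Ioc (0 : ℝ) (n : ℝ), ENNReal.ofReal ε := by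
        exact mul_le_mul_right (setLIntegral_mono measurable_const key) _
    _ = ((n : ℝ≥0∞))⁻¹ * (ENNReal.ofReal ε * volume (Set.Ioc (0 : ℝ) (n : ℝ))) := by
        rw [setLIntegral_const]
    _ = ((n : ℝ≥0∞))⁻¹ * ((n : ℝ≥0∞) * ENNReal.ofReal ε) := by
        rw [Real.volume_Ioc]
        simp [mul_comm, ENNReal.ofReal_natCast]
    _ = ENNReal.ofReal ε := by
        rw [← mul_assoc, ENNReal.inv_mul_cancel hn0 (ENNReal.natCast_ne_top n), one_mul]
end

section
/- Let X and Y be Polish spaces with their Borel σ-algebras and let j : X → Y be a continuous injective map. Let (μ_n)_{n∈ℕ} and μ be Borel probability measures on X such that the family {μ_n : n ∈ ℕ} is tight and the pushforward measures j_*μ_n converge weakly on Y to j_*μ. Then μ_n converges weakly to μ on X. -/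
open MeasureTheory Filter Topology

/-- limit identification concluding the proof of Lemma 4.1. If a tight family
of Borel probability measures `μ n` on a Polish space `X` is such that the pushforwards by a
continuous injection `j : X → Y` converge weakly to the pushforward of `ν`, then `μ n → ν`
weakly on `X`. -/
theorem stmt_8
    {X : Type*} [TopologicalSpace X] [PolishSpace X] [MeasurableSpace X] [BorelSpace X]
    {Y : Type*} [TopologicalSpace Y] [PolishSpace Y] [MeasurableSpace Y] [BorelSpace Y]
    (j : X → Y) (hj_cont : Continuous j) (hj_inj : Function.Injective j)
    (μ : ℕ → Measure X) (ν : Measure X)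
    (hμprob : ∀ n, IsProbabilityMeasure (μ n)) (hνprob : IsProbabilityMeasure ν)
    -- tightness of `{μ n}`
    (htight : ∀ ε > (0 : ℝ), ∃ K : Set X, IsCompact K ∧ ∀ n, μ n Kᶜ ≤ ENNReal.ofReal ε)
    -- weak convergence of the pushforwards `j_* μ n → j_* ν` on `Y`
    (hpush : ∀ g : BoundedContinuousFunction Y ℝ,
      Tendsto (fun n => ∫ y, g y ∂((μ n).map j)) atTop (𝓝 (∫ y, g y ∂(ν.map j)))) :
    -- conclusion: weak convergence `μ n → ν` on `X`
    ∀ g : BoundedContinuousFunction X ℝ,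
      Tendsto (fun n => ∫ x, g x ∂(μ n)) atTop (𝓝 (∫ x, g x ∂ν)) := by
  intro g
  have hνmem : ∀ n, IsProbabilityMeasure ((μ n).map j) := fun n =>
    have := hμprob n
    Measure.isProbabilityMeasure_map hj_cont.measurable.aemeasurable
  have hνmem' : IsProbabilityMeasure (ν.map j) :=
    Measure.isProbabilityMeasure_map hj_cont.measurable.aemeasurable
  -- weak convergence of pushforwards as `ProbabilityMeasure`s
  set P : ℕ → ProbabilityMeasure Y := fun n => ⟨(μ n).map j, hνmem n⟩ with hP
  set Q : ProbabilityMeasure Y := ⟨ν.map j, hνmem'⟩ with hQ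
  have hPQ : Tendsto P atTop (𝓝 Q) := by
    rw [ProbabilityMeasure.tendsto_iff_forall_integral_tendsto]
    exact hpush
  rw [Metric.tendsto_atTop]
  intro ε hε
  set C : ℝ := ‖g‖ with hC
  have hC0 : (0 : ℝ) ≤ C := norm_nonneg _
  set δ : ℝ := ε / (8 * (C + 1)) with hδdef
  have hδpos : 0 < δ := by positivity
  obtain ⟨K, hK, hKμ⟩ := htight δ hδpos
  have hKclosed : IsClosed K := hK.isClosed
  have hKmeas : MeasurableSet K := hKclosed.measurableSet
  -- `ν Kᶜ ≤ δ` via portmanteau applied to the closed set `j '' K`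
  have hjK : IsCompact (j '' K) := hK.image hj_cont
  have hjKclosed : IsClosed (j '' K) := hjK.isClosed
  have hpre : j ⁻¹' (j '' K) = K := Set.preimage_image_eq K hj_inj
  have hKν : ν Kᶜ ≤ ENNReal.ofReal δ := by
    have hlimsup : (atTop.limsup fun n => (P n : Measure Y) (j '' K)) ≤
        (Q : Measure Y) (j '' K) :=
      ProbabilityMeasure.limsup_measure_closed_le_of_tendsto hPQ hjKclosed
    have hterm : ∀ n, (1 : ENNReal) - ENNReal.ofReal δ ≤ (P n : Measure Y) (j '' K) := by
      intro n
      have := hμprob n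
      have h1 : (P n : Measure Y) (j '' K) = μ n K := by
        show (Measure.map j (μ n)) (j '' K) = μ n K
        rw [Measure.map_apply hj_cont.measurable hjKclosed.measurableSet, hpre]
      rw [h1]
      have h2 : μ n K = 1 - μ n Kᶜ := by
        rw [← prob_compl_eq_one_sub hKmeas.compl, compl_compl]
      rw [h2]
      exact tsub_le_tsub_left (hKμ n) 1
    have hconst : (1 : ENNReal) - ENNReal.ofReal δ ≤
        atTop.limsup fun n => (P n : Measure Y) (j '' K) := by
      calc (1 : ENNReal) - ENNReal.ofReal δ
          = atTop.limsup (fun _ : ℕ => (1 : ENNReal) - ENNReal.ofReal δ) := (limsup_const _).symm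
        _ ≤ _ := limsup_le_limsup (Eventually.of_forall hterm)
    have hQK : (1 : ENNReal) - ENNReal.ofReal δ ≤ ν K := by
      have : (Q : Measure Y) (j '' K) = ν K := by
        show (Measure.map j ν) (j '' K) = ν K
        rw [Measure.map_apply hj_cont.measurable hjKclosed.measurableSet, hpre]
      rw [← this]
      exact hconst.trans hlimsup
    have : ν Kᶜ = 1 - ν K := prob_compl_eq_one_sub hKmeas
    rw [this]
    calc (1 : ENNReal) - ν K ≤ 1 - (1 - ENNReal.ofReal δ) := tsub_le_tsub_left hQK 1
      _ ≤ ENNReal.ofReal δ := by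
          rw [tsub_le_iff_right]
          exact le_add_tsub
  -- Tietze extension of `g ∘ (j|_K)⁻¹`
  haveI : CompactSpace K := isCompact_iff_compactSpace.mp hK
  have hjKcont : Continuous (fun x : K => j x) := hj_cont.comp continuous_subtype_val
  have hjKinj : Function.Injective (fun x : K => j x) :=
    hj_inj.comp Subtype.val_injective
  have hembed : IsClosedEmbedding (fun x : K => j x) := hjKcont.isClosedEmbedding hjKinj
  letI := TopologicalSpace.upgradeIsCompletelyMetrizable Y
  obtain ⟨h, hnorm, hcomp⟩ :=
    BoundedContinuousFunction.exists_extension_norm_eq_of_isClosedEmbedding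
      (g.compContinuous ⟨Subtype.val, continuous_subtype_val⟩) hembed
  have hnormle : ‖h‖ ≤ C :=
    hnorm.le.trans (BoundedContinuousFunction.norm_compContinuous_le _ _)
  -- the error function `f = g - h ∘ j` vanishes on `K` and is bounded by `2C`
  set f : BoundedContinuousFunction X ℝ := g - h.compContinuous ⟨j, hj_cont⟩ with hf
  have hfK : ∀ x ∈ K, f x = 0 := by
    intro x hx
    have := congrFun hcomp ⟨x, hx⟩
    simp only [Function.comp_apply, BoundedContinuousFunction.compContinuous_apply,
      ContinuousMap.coe_mk] at this ⊢
    simp [hf, this]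
  have hfbound : ∀ x, ‖f x‖ ≤ 2 * C := by
    intro x
    have h1 : ‖g x‖ ≤ C := g.norm_coe_le_norm x
    have h2 : ‖h (j x)‖ ≤ C := (h.norm_coe_le_norm (j x)).trans hnormle
    calc ‖f x‖ = ‖g x - h (j x)‖ := rfl
      _ ≤ ‖g x‖ + ‖h (j x)‖ := norm_sub_le _ _
      _ ≤ 2 * C := by linarith
  -- key bound: `|∫ f dρ| ≤ 2C·δ` for any prob. measure with `ρ Kᶜ ≤ δ`
  have key : ∀ (ρ : Measure X), IsProbabilityMeasure ρ → ρ Kᶜ ≤ ENNReal.ofReal δ →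
      |∫ x, f x ∂ρ| ≤ 2 * C * δ := by
    intro ρ hρ hρK
    haveI := hρ
    have hint : Integrable f ρ := f.integrable ρ
    have hsplit : ∫ x, f x ∂ρ = (∫ x in K, f x ∂ρ) + ∫ x in Kᶜ, f x ∂ρ :=
      (integral_add_compl hKmeas hint).symm
    have hzero : ∫ x in K, f x ∂ρ = 0 :=
      setIntegral_eq_zero_of_forall_eq_zero hfK
    have hlt : ρ Kᶜ < ⊤ := measure_lt_top ρ _
    have hbound : ‖∫ x in Kᶜ, f x ∂ρ‖ ≤ 2 * C * (ρ Kᶜ).toReal :=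
      norm_setIntegral_le_of_norm_le_const_ae' hlt
        (Eventually.of_forall fun x _ => hfbound x)
    have htoReal : (ρ Kᶜ).toReal ≤ δ := by
      have := ENNReal.toReal_mono ENNReal.ofReal_ne_top hρK
      rwa [ENNReal.toReal_ofReal hδpos.le] at this
    rw [hsplit, hzero, zero_add, ← Real.norm_eq_abs]
    calc ‖∫ x in Kᶜ, f x ∂ρ‖ ≤ 2 * C * (ρ Kᶜ).toReal := hbound
      _ ≤ 2 * C * δ := by nlinarith
  -- convergence of the middle term
  have hmid : Tendsto (fun n => ∫ x, h (j x) ∂(μ n)) atTop (𝓝 (∫ x, h (j x) ∂ν)) := by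
    have e1 : ∀ n, ∫ x, h (j x) ∂(μ n) = ∫ y, h y ∂((μ n).map j) := fun n =>
      (integral_map hj_cont.measurable.aemeasurable h.continuous.aestronglyMeasurable).symm
    have e2 : ∫ x, h (j x) ∂ν = ∫ y, h y ∂(ν.map j) :=
      (integral_map hj_cont.measurable.aemeasurable h.continuous.aestronglyMeasurable).symm
    simp only [e1, e2]
    exact hpush h
  have hmid' : ∀ᶠ n in atTop,
      dist (∫ x, h (j x) ∂(μ n)) (∫ x, h (j x) ∂ν) < ε / 4 :=
    (hmid.eventually (Metric.ball_mem_nhds _ (by positivity) : _)).mono fun n hn => hn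
  rw [eventually_atTop] at hmid'
  obtain ⟨N, hN⟩ := hmid'
  refine ⟨N, fun n hn => ?_⟩
  have hμn := hμprob n
  -- combine
  have hintg : ∀ (ρ : Measure X), IsProbabilityMeasure ρ →
      ∫ x, g x ∂ρ - ∫ x, h (j x) ∂ρ = ∫ x, f x ∂ρ := by
    intro ρ hρ
    haveI := hρ
    have : ∫ x, f x ∂ρ = ∫ x, g x ∂ρ - ∫ x, (h.compContinuous ⟨j, hj_cont⟩) x ∂ρ := by
      rw [hf]
      exact integral_sub (g.integrable ρ) ((h.compContinuous ⟨j, hj_cont⟩).integrable ρ)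
    rw [this]; rfl
  have b1 : |∫ x, g x ∂(μ n) - ∫ x, h (j x) ∂(μ n)| ≤ 2 * C * δ := by
    rw [hintg (μ n) hμn]; exact key (μ n) hμn (hKμ n)
  have b3 : |∫ x, g x ∂ν - ∫ x, h (j x) ∂ν| ≤ 2 * C * δ := by
    rw [hintg ν hνprob]; exact key ν hνprob hKν
  have b2 : |∫ x, h (j x) ∂(μ n) - ∫ x, h (j x) ∂ν| < ε / 4 := by
    have := hN n hn
    rwa [Real.dist_eq] at this
  have hδsmall : 2 * C * δ ≤ ε / 4 := by
    have h1 : δ * (8 * (C + 1)) = ε := by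
      rw [hδdef]; field_simp
    nlinarith [hδpos.le, hC0, mul_nonneg hδpos.le hC0]
  rw [Real.dist_eq]
  calc |∫ x, g x ∂(μ n) - ∫ x, g x ∂ν|
      ≤ |∫ x, g x ∂(μ n) - ∫ x, h (j x) ∂(μ n)| +
        |∫ x, h (j x) ∂(μ n) - ∫ x, h (j x) ∂ν| +
        |∫ x, h (j x) ∂ν - ∫ x, g x ∂ν| := by
          have := abs_sub_le (∫ x, g x ∂(μ n)) (∫ x, h (j x) ∂(μ n)) (∫ x, g x ∂ν)
          have := abs_sub_le (∫ x, h (j x) ∂(μ n)) (∫ x, h (j x) ∂ν) (∫ x, g x ∂ν)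
          linarith
    _ < ε := by rw [abs_sub_comm (∫ x, h (j x) ∂ν)]; linarith
end
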